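/- arXiv:0912.0584 — 3 statements merged into one kernel-verified Lean document; each statement's English description precedes it below -/
import Mathlib

section
/- When n is odd, the coefficient ω(n) of q^n in Ramanujan's third order mock theta function ω(q) = Σ_{k≥0} q^{2k²+2k}/∏_{j=0}^{k}(1−q^{2j+1})² is even. -/
/-!
Each factor `(1 - q^s)⁻¹` is the image of an integer power series, so the `k`-th summand of `ω(q)`
is `q^(2k²+2k)` times the square of an integer series `f`. Since `2k²+2k` is even, an odd
coefficient of the summand is an odd coefficient of `f²`, namely `∑_{i+j=m} aᵢ aⱼ` with `m` odd:
there `i ≠ j`, so the terms pair off as `(i, j) ↔ (j, i)` and the sum is even.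
-/

open PowerSeries Finset

/-- The coefficient `ω(n)` of `q^n` in Ramanujan's third order mock theta function
`ω(q) = Σ_{k≥0} q^{2k²+2k} / ∏_{j=0}^{k} (1 − q^{2j+1})²`, computed in `ℚ[[q]]`.
Since the `k`-th summand has order `2k²+2k ≥ k`, truncating the sum at `k = n`
captures the coefficient of `q^n`. -/
noncomputable def mockOmegaCoeff (n : ℕ) : ℚ :=
  ∑ k ∈ Finset.range (n + 1),
    PowerSeries.coeff n
      (PowerSeries.X ^ (2 * k ^ 2 + 2 * k) *
        (∏ j ∈ Finset.range (k + 1), (1 - PowerSeries.X ^ (2 * j + 1) : PowerSeries ℚ)⁻¹) ^ 2)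

namespace PowerSeries

section Parity

variable {R : Type*} [CommSemiring R]

theorem even_coeff_sq (f : R⟦X⟧) {m : ℕ} (hm : Odd m) : Even (coeff m (f ^ 2)) := by
  obtain ⟨t, rfl⟩ := hm
  refine ⟨∑ i ∈ range (t + 1), coeff i f * coeff (2 * t + 1 - i) f, ?_⟩
  rw [sq, coeff_mul, Nat.sum_antidiagonal_eq_sum_range_succ (fun i j ↦ coeff i f * coeff j f),
    show (2 * t + 1).succ = (t + 1) + (t + 1) by omega, sum_range_add]
  congr 1
  rw [← sum_range_reflect]
  refine sum_congr rfl fun i hi ↦ ?_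
  have hi : i < t + 1 := mem_range.mp hi
  rw [mul_comm]
  congr 3 <;> omega

theorem even_coeff_X_pow_mul_sq (f : R⟦X⟧) {a n : ℕ} (ha : Even a) (hn : Odd n) :
    Even (coeff n (X ^ a * f ^ 2)) := by
  rw [coeff_X_pow_mul']
  split_ifs with h
  · exact even_coeff_sq f (Nat.Odd.sub_even h hn ha)
  · exact Even.zero

end Parity

section Integrality

variable {k : Type*} [Field k]

theorem map_invOfUnit {R : Type*} [CommRing R] (φ : R →+* k) (f : R⟦X⟧) (u : Rˣ)
    (h : constantCoeff f = u) : map φ (invOfUnit f u) = (map φ f)⁻¹ := by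
  symm
  rw [inv_eq_iff_mul_eq_one, ← map_mul, invOfUnit_mul f u h, map_one]
  rw [← coeff_zero_eq_constantCoeff_apply, coeff_map, coeff_zero_eq_constantCoeff_apply, h]
  exact (u.isUnit.map φ).ne_zero

theorem inv_one_sub_X_pow_eq_map {s : ℕ} (hs : 0 < s) :
    (1 - X ^ s : k⟦X⟧)⁻¹ = map (Int.castRingHom k) (invOfUnit (1 - X ^ s) 1) := by
  rw [map_invOfUnit]
  · simp
  · simp [zero_pow hs.ne']

theorem mockOmega_summand_eq_map (n : ℕ) :
    X ^ (2 * n ^ 2 + 2 * n) * (∏ j ∈ range (n + 1), (1 - X ^ (2 * j + 1) : k⟦X⟧)⁻¹) ^ 2 =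
      map (Int.castRingHom k)
        (X ^ (2 * n ^ 2 + 2 * n) * (∏ j ∈ range (n + 1), invOfUnit (1 - X ^ (2 * j + 1)) 1) ^ 2) := by
  rw [map_mul, map_pow, map_pow, map_X, map_prod]
  congr 2
  exact prod_congr rfl fun j _ ↦ inv_one_sub_X_pow_eq_map (Nat.succ_pos _)

end Integrality

end PowerSeries

/-- When `n` is odd, `ω(n)` is even. -/
theorem mockOmegaCoeff_even_of_odd (n : ℕ) (hn : Odd n) :
    ∃ m : ℤ, mockOmegaCoeff n = 2 * m := by
  obtain ⟨m, hm⟩ : 2 ∣ ∑ k ∈ range (n + 1), coeff n (X ^ (2 * k ^ 2 + 2 * k) *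
      (∏ j ∈ range (k + 1), invOfUnit (1 - X ^ (2 * j + 1) : ℤ⟦X⟧) 1) ^ 2) :=
    dvd_sum fun k _ ↦ (even_coeff_X_pow_mul_sq _ ⟨k ^ 2 + k, by ring⟩ hn).two_dvd
  refine ⟨m, ?_⟩
  simp only [mockOmegaCoeff, mockOmega_summand_eq_map, coeff_map, eq_intCast, ← Int.cast_sum, hm]
  push_cast
  rfl
end

section
/- For a formal power series F(t) = Σ_{n≥0} t^n/(tq;q)_n with |q|<1 (treated formally in t and q), one has (1−t)F(t) = 1 + (t²q/(1−tq)²)·(1−tq)F(tq), equivalently R(t) = 1 + (t²q/(1−tq)²)R(tq) where R(t) = (1−t)F(t). -/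
/-!
Write `I n = 1 / (tq;q)_n`, so that `F = ∑ tⁿ I n`. Since `I n = (1 - q^(n+1) t) I (n+1)`,
`tⁿ⁺¹ I (n+1) - tⁿ⁺¹ I n = q^(n+1) t^(n+2) I (n+1)`; summing over `n` gives
`(1 - t) F = 1 + ∑ q^(n+1) t^(n+2) I (n+1)`. On the other side, `t ↦ tq` maps `(tq;q)_n` to
`(tq;q)_(n+1) / (1 - tq)`, so `F(tq) = (1 - tq) ∑ qⁿ tⁿ I (n+1)`, and the right-hand side
collapses to the same sum.
-/

open PowerSeries Finset

/-- The formal variable `q`, as an element of `ℚ[[q]]`. -/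
noncomputable def qvar : PowerSeries ℚ := PowerSeries.X

/-- The `q`-Pochhammer factor `(tq;q)_n = ∏_{i=1}^{n} (1 − t q^i)`, as an element of
`ℚ[[q]][[t]]` (the outer variable `X` is `t`). -/
noncomputable def tqPoch (n : ℕ) : PowerSeries (PowerSeries ℚ) :=
  ∏ i ∈ Finset.range n, (1 - PowerSeries.C (R := PowerSeries ℚ) (qvar ^ (i + 1)) * PowerSeries.X)

/-- `F(t) = Σ_{n≥0} t^n / (tq;q)_n` as an element of `ℚ[[q]][[t]]`. Each summand has
`t`-order `≥ n`, so the coefficient of `t^m` only involves summands with `n ≤ m`.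
The inverse of `(tq;q)_n` (which has constant term `1`) is `invOfUnit _ 1`. -/
noncomputable def rogersFineF : PowerSeries (PowerSeries ℚ) :=
  PowerSeries.mk fun m =>
    ∑ n ∈ Finset.range (m + 1),
      PowerSeries.coeff (R := PowerSeries ℚ) m
        (PowerSeries.X ^ n * PowerSeries.invOfUnit (tqPoch n) 1)

namespace PowerSeries

section OrderSum

variable {R : Type*} [Semiring R]

/-- `∑ n, a n` for families with `X ^ n ∣ a n`, which makes every coefficient a finite sum;
junk for other families. -/
noncomputable def orderSum (a : ℕ → R⟦X⟧) : R⟦X⟧ :=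
  mk fun m => ∑ n ∈ range (m + 1), coeff m (a n)

lemma coeff_orderSum_eq_sum_range (a : ℕ → R⟦X⟧) (ha : ∀ n, (X : R⟦X⟧) ^ n ∣ a n)
    {m N : ℕ} (hm : m < N) : coeff m (orderSum a) = ∑ n ∈ range N, coeff m (a n) := by
  rw [orderSum, coeff_mk]
  refine sum_subset (range_subset_range.2 hm) fun n _ hn => ?_
  exact X_pow_dvd_iff.mp (ha n) m (by simpa using hn)

lemma orderSum_add (a b : ℕ → R⟦X⟧) :
    orderSum (fun n => a n + b n) = orderSum a + orderSum b := by
  ext m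
  simp [orderSum, sum_add_distrib]

lemma mul_orderSum (g : R⟦X⟧) (a : ℕ → R⟦X⟧) (ha : ∀ n, (X : R⟦X⟧) ^ n ∣ a n) :
    g * orderSum a = orderSum (fun n => g * a n) := by
  ext m
  calc coeff m (g * orderSum a)
      = ∑ p ∈ antidiagonal m, ∑ n ∈ range (m + 1), coeff p.1 g * coeff p.2 (a n) := by
        rw [coeff_mul]
        refine sum_congr rfl fun p hp => ?_
        rw [coeff_orderSum_eq_sum_range a ha
          (Nat.lt_succ_of_le (HasAntidiagonal.antidiagonal.snd_le hp)), mul_sum]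
    _ = ∑ n ∈ range (m + 1), ∑ p ∈ antidiagonal m, coeff p.1 g * coeff p.2 (a n) := sum_comm
    _ = coeff m (orderSum fun n => g * a n) := by simp only [orderSum, coeff_mk, coeff_mul]

lemma orderSum_eq_add_orderSum_succ (a : ℕ → R⟦X⟧)
    (ha : ∀ n, (X : R⟦X⟧) ^ n ∣ a n) : orderSum a = a 0 + orderSum (fun n => a (n + 1)) := by
  ext m
  have hlast : coeff m (a (m + 1)) = 0 := X_pow_dvd_iff.mp (ha (m + 1)) m (by omega)
  rw [map_add, orderSum, orderSum, coeff_mk, coeff_mk, sum_range_succ', sum_range_succ, hlast,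
    add_zero, add_comm]

end OrderSum

lemma rescale_orderSum {R : Type*} [CommSemiring R] (r : R) (a : ℕ → R⟦X⟧) :
    rescale r (orderSum a) = orderSum (fun n => rescale r (a n)) := by
  ext m
  simp [orderSum, mul_sum]

lemma rescale_C {R : Type*} [CommSemiring R] (a c : R) : rescale a (C c) = C c := by
  ext (_ | n) <;> simp [coeff_C]

lemma one_sub_C_mul_X_mul_invOfUnit {R : Type*} [Ring R] (a : R) :
    (1 - C a * X) * invOfUnit (1 - C a * X) 1 = 1 :=
  mul_invOfUnit _ 1 (by simp)

end PowerSeries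

noncomputable def tqPochInv (n : ℕ) : PowerSeries (PowerSeries ℚ) :=
  invOfUnit (tqPoch n) 1

lemma rogersFineF_eq_orderSum : rogersFineF = orderSum fun n => X ^ n * tqPochInv n := rfl

lemma tqPoch_mul_tqPochInv (n : ℕ) : tqPoch n * tqPochInv n = 1 :=
  mul_invOfUnit _ 1 (by simp [tqPoch, map_prod])

lemma tqPochInv_mul_tqPoch (n : ℕ) : tqPochInv n * tqPoch n = 1 :=
  mul_comm (tqPoch n) _ ▸ tqPoch_mul_tqPochInv n

lemma tqPochInv_zero : tqPochInv 0 = 1 :=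
  left_inv_eq_right_inv (tqPochInv_mul_tqPoch 0) (by rw [tqPoch, prod_range_zero, one_mul])

lemma tqPoch_succ (n : ℕ) : tqPoch (n + 1) = tqPoch n * (1 - C (qvar ^ (n + 1)) * X) :=
  prod_range_succ _ n

lemma tqPochInv_eq_mul_tqPochInv_succ (n : ℕ) :
    tqPochInv n = (1 - C (qvar ^ (n + 1)) * X) * tqPochInv (n + 1) := by
  refine left_inv_eq_right_inv (tqPochInv_mul_tqPoch n) ?_
  rw [← mul_assoc, ← tqPoch_succ, tqPoch_mul_tqPochInv]

lemma one_sub_C_mul_X_mul_rescale_tqPoch (n : ℕ) :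
    (1 - C qvar * X) * rescale qvar (tqPoch n) = tqPoch (n + 1) := by
  have hfactor (i : ℕ) :
      rescale qvar (1 - C (qvar ^ (i + 1)) * X) = 1 - C (qvar ^ (i + 1 + 1)) * X := by
    rw [map_sub, map_one, map_mul, rescale_X, rescale_C, ← mul_assoc, ← map_mul, ← pow_succ]
  rw [tqPoch, map_prod, tqPoch, prod_range_succ']
  simp only [hfactor, zero_add, pow_one]
  exact mul_comm _ _

lemma rescale_tqPochInv (n : ℕ) :
    rescale qvar (tqPochInv n) = (1 - C qvar * X) * tqPochInv (n + 1) := by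
  refine left_inv_eq_right_inv (a := rescale qvar (tqPoch n)) ?_ ?_
  · rw [← map_mul, mul_comm, tqPoch_mul_tqPochInv, map_one]
  · rw [mul_left_comm, ← mul_assoc, one_sub_C_mul_X_mul_rescale_tqPoch, tqPoch_mul_tqPochInv]

noncomputable def rogersFineTail : PowerSeries (PowerSeries ℚ) :=
  orderSum fun n => X ^ (n + 2) * C (qvar ^ (n + 1)) * tqPochInv (n + 1)

lemma one_sub_X_mul_rogersFineF : (1 - X) * rogersFineF = 1 + rogersFineTail := by
  have hshift : rogersFineF = 1 + orderSum fun n => X ^ (n + 1) * tqPochInv (n + 1) := by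
    rw [rogersFineF_eq_orderSum, orderSum_eq_add_orderSum_succ _ fun n => dvd_mul_right _ _,
      tqPochInv_zero, pow_zero, one_mul]
  have hX : X * rogersFineF = orderSum fun n => X ^ (n + 1) * tqPochInv n := by
    simp only [rogersFineF_eq_orderSum, mul_orderSum _ _ fun n => dvd_mul_right _ _, ← mul_assoc,
      ← pow_succ']
  have hdiff : (orderSum fun n => X ^ (n + 1) * tqPochInv (n + 1)) =
      (orderSum fun n => X ^ (n + 1) * tqPochInv n) + rogersFineTail := by
    rw [rogersFineTail, ← orderSum_add]
    refine congrArg orderSum (funext fun n => ?_)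
    rw [tqPochInv_eq_mul_tqPochInv_succ n]
    ring
  linear_combination hshift - hX + hdiff

lemma rescale_rogersFineF :
    rescale qvar rogersFineF =
      (1 - C qvar * X) * orderSum fun n => C (qvar ^ n) * X ^ n * tqPochInv (n + 1) := by
  rw [rogersFineF_eq_orderSum, rescale_orderSum,
    mul_orderSum _ _ fun n => ⟨C (qvar ^ n) * tqPochInv (n + 1), by ring⟩]
  refine congrArg orderSum (funext fun n => ?_)
  rw [map_mul, map_pow, rescale_X, rescale_tqPochInv, mul_pow, ← map_pow]
  ring

lemma rogersFine_rhs_eq_rogersFineTail :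
    X ^ 2 * C qvar * invOfUnit (1 - C qvar * X) 1 ^ 2 *
      ((1 - C qvar * X) * rescale qvar rogersFineF) = rogersFineTail := by
  have hJ := one_sub_C_mul_X_mul_invOfUnit qvar
  have hcancel (S : PowerSeries (PowerSeries ℚ)) :
      X ^ 2 * C qvar * invOfUnit (1 - C qvar * X) 1 ^ 2 *
          ((1 - C qvar * X) * ((1 - C qvar * X) * S)) = X ^ 2 * C qvar * S := by
    linear_combination
      X ^ 2 * C qvar * S * ((1 - C qvar * X) * invOfUnit (1 - C qvar * X) 1 + 1) * hJ
  rw [rescale_rogersFineF, hcancel,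
    mul_orderSum _ _ fun n => ⟨C (qvar ^ n) * tqPochInv (n + 1), by ring⟩]
  unfold rogersFineTail
  refine congrArg orderSum (funext fun n => ?_)
  simp only [pow_succ qvar, map_mul]
  ring

/-- The functional equation `(1−t)F(t) = 1 + (t²q/(1−tq)²)·(1−tq)·F(tq)`, equivalently
`R(t) = 1 + (t²q/(1−tq)²)·R(tq)` where `R(t) = (1−t)F(t)`. Substitution `t ↦ tq` is
`rescale q`. -/
theorem rogersFine_functional_equation :
    (1 - PowerSeries.X) * rogersFineF =
      1 + PowerSeries.X ^ 2 * PowerSeries.C (R := PowerSeries ℚ) qvar *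
        (PowerSeries.invOfUnit (1 - PowerSeries.C (R := PowerSeries ℚ) qvar * PowerSeries.X) 1) ^ 2 *
        ((1 - PowerSeries.C (R := PowerSeries ℚ) qvar * PowerSeries.X) *
          PowerSeries.rescale qvar rogersFineF) ∧
    (1 - PowerSeries.X) * rogersFineF =
      1 + PowerSeries.X ^ 2 * PowerSeries.C (R := PowerSeries ℚ) qvar *
        (PowerSeries.invOfUnit (1 - PowerSeries.C (R := PowerSeries ℚ) qvar * PowerSeries.X) 1) ^ 2 *
        PowerSeries.rescale qvar ((1 - PowerSeries.X) * rogersFineF) := by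
  have hfirst : (1 - X) * rogersFineF = 1 + X ^ 2 * C qvar * invOfUnit (1 - C qvar * X) 1 ^ 2 *
      ((1 - C qvar * X) * rescale qvar rogersFineF) := by
    rw [one_sub_X_mul_rogersFineF, rogersFine_rhs_eq_rogersFineTail]
  have hrescale :
      rescale qvar ((1 - X) * rogersFineF) = (1 - C qvar * X) * rescale qvar rogersFineF := by
    rw [map_mul, map_sub, map_one, rescale_X]
  exact ⟨hfirst, hrescale ▸ hfirst⟩
end

section
/- Zagier's polynomial S_r(x,y,z) = ((xy)^r(x+y)^{r+1} + (yz)^r(y+z)^{r+1} + (zx)^r(z+x)^{r+1})/(x+y+z) has integer coefficients, i.e., x+y+z divides (xy)^r(x+y)^{r+1} + (yz)^r(y+z)^{r+1} + (zx)^r(z+x)^{r+1} in ℤ[x,y,z] for every r ≥ 0. -/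
/-!
If `a + b + c = 0` then `a + b = -c`, `b + c = -a`, `c + a = -b`, so each summand becomes
`(-1)^(r+1) (abc)^r` times the missing variable and the sum is `(-1)^(r+1) (abc)^r (a + b + c) = 0`.
Divisibility by `a + b + c` follows by passing to the quotient ring by this element.
-/

open MvPolynomial

theorem zagier_sum_eq_zero_of_add_add_eq_zero {R : Type*} [CommRing R] {a b c : R}
    (h : a + b + c = 0) (r : ℕ) :
    (a * b) ^ r * (a + b) ^ (r + 1) + (b * c) ^ r * (b + c) ^ (r + 1) +
      (c * a) ^ r * (c + a) ^ (r + 1) = 0 := by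
  rw [show a + b = -c by linear_combination h, show b + c = -a by linear_combination h,
    show c + a = -b by linear_combination h]
  calc _ = (-1) ^ (r + 1) * (a * b * c) ^ r * (a + b + c) := by ring
    _ = 0 := by rw [h, mul_zero]

theorem add_add_dvd_zagier_sum {R : Type*} [CommRing R] (a b c : R) (r : ℕ) :
    a + b + c ∣ (a * b) ^ r * (a + b) ^ (r + 1) + (b * c) ^ r * (b + c) ^ (r + 1) +
      (c * a) ^ r * (c + a) ^ (r + 1) := by
  let q := Ideal.Quotient.mk (Ideal.span {a + b + c})
  have hq : q a + q b + q c = 0 := by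
    rw [← map_add, ← map_add]
    exact Ideal.Quotient.mk_singleton_self _
  rw [← Ideal.Quotient.eq_zero_iff_dvd]
  simpa only [map_add, map_mul, map_pow] using zagier_sum_eq_zero_of_add_add_eq_zero hq r

/-- Zagier's polynomial `S_r(x,y,z)` has integer coefficients: `x+y+z` divides
`(xy)^r (x+y)^{r+1} + (yz)^r (y+z)^{r+1} + (zx)^r (z+x)^{r+1}` in `ℤ[x,y,z]`
for every `r ≥ 0`. -/
theorem zagier_Sr_integral (r : ℕ) :
    ∃ S : MvPolynomial (Fin 3) ℤ,
      (X 0 * X 1) ^ r * (X 0 + X 1) ^ (r + 1) +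
        (X 1 * X 2) ^ r * (X 1 + X 2) ^ (r + 1) +
        (X 2 * X 0) ^ r * (X 2 + X 0) ^ (r + 1) =
      (X 0 + X 1 + X 2) * S :=
  add_add_dvd_zagier_sum (X 0) (X 1) (X 2) r
end
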